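/- arXiv:1803.06496 — 2 statements merged into one kernel-verified Lean document; each statement's English description precedes it below -/
import Mathlib

section
/- In the Dinkelbach iteration x^{k+1} ∈ argmin_{‖x‖_p = 1} ( r^k ‖x‖_∞ − I(x) ), r^{k+1} = F(x^{k+1}), starting from any x^0 ≠ 0 with r^0 = F(x^0), the sequence (r^k) is monotonically nondecreasing and bounded above by r_max = max_{x≠0} F(x). -/
/-! The Dinkelbach objective `z ↦ r^k ‖z‖_∞ - I(z)` is positively homogeneous and vanishes at
`x^k`, hence also at the rescaling of `x^k` to the unit `p`-sphere. Its minimum value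
`r^k ‖x^{k+1}‖_∞ - I(x^{k+1})` is therefore `≤ 0`, which is `r^k ≤ r^{k+1}`. The upper bound
holds because `r^k` is a value of `F`, and `F` is bounded above since
`I(y) ≤ (∑ w_{ij}) ‖y‖_∞`. -/

open Finset
open scoped ENNReal

noncomputable def Ifun {n : ℕ} (w : Fin n → Fin n → ℝ) (x : Fin n → ℝ) : ℝ :=
  (1 / 2) * ∑ i, ∑ j, w i j * |x i - x j|

/-- The `p`-norm on `ℝ^n`, `p ∈ [1,∞]` (`‖·‖` is the sup norm on `Fin n → ℝ`). -/
noncomputable def pnorm {n : ℕ} (p : ℝ≥0∞) (x : Fin n → ℝ) : ℝ :=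
  if p = ⊤ then ‖x‖ else (∑ i, |x i| ^ p.toReal) ^ (1 / p.toReal)

theorem div_le_div_of_isMinOn_sub {E : Type*} [SMul ℝ E] {N D : E → ℝ} {S : Set E} {x y : E}
    {c : ℝ} (hmin : IsMinOn (fun z ↦ N x / D x * D z - N z) S y) (hcx : c • x ∈ S)
    (hN : N (c • x) = c * N x) (hD : D (c • x) = c * D x) (hDx : D x ≠ 0) (hDy : 0 < D y) :
    N x / D x ≤ N y / D y := by
  have hzero : N x / D x * D (c • x) - N (c • x) = 0 := by
    rw [hN, hD]; field_simp; ring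
  have hy : N x / D x * D y - N y ≤ 0 := hzero ▸ isMinOn_iff.mp hmin _ hcx
  rw [le_div_iff₀ hDy]
  linarith

section pnorm

variable {n : ℕ} {p : ℝ≥0∞}

theorem pnorm_eq_norm_toLp (hp : p ≠ 0) (x : Fin n → ℝ) :
    pnorm p x = ‖WithLp.toLp p x‖ := by
  unfold pnorm
  split_ifs with htop
  · subst htop
    exact (PiLp.norm_toLp x).symm
  · simp [PiLp.norm_eq_sum (ENNReal.toReal_pos hp htop), Real.norm_eq_abs]

theorem pnorm_nonneg (p : ℝ≥0∞) (x : Fin n → ℝ) : 0 ≤ pnorm p x := by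
  unfold pnorm
  split_ifs <;> positivity

theorem ne_zero_of_pnorm_eq_one (hp : 1 ≤ p) {x : Fin n → ℝ} (hx : pnorm p x = 1) : x ≠ 0 := by
  have : Fact (1 ≤ p) := ⟨hp⟩
  rintro rfl
  simp [pnorm_eq_norm_toLp (zero_lt_one.trans_le hp).ne'] at hx

theorem pnorm_inv_smul_self (hp : 1 ≤ p) {x : Fin n → ℝ} (hx : x ≠ 0) :
    pnorm p ((pnorm p x)⁻¹ • x) = 1 := by
  have : Fact (1 ≤ p) := ⟨hp⟩
  have hp0 : p ≠ 0 := (zero_lt_one.trans_le hp).ne'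
  simp only [pnorm_eq_norm_toLp hp0, WithLp.toLp_smul, norm_smul, norm_inv, norm_norm]
  exact inv_mul_cancel₀ (by simpa using hx)

end pnorm

section Ifun

variable {n : ℕ} (w : Fin n → Fin n → ℝ)

theorem Ifun_smul {c : ℝ} (hc : 0 ≤ c) (x : Fin n → ℝ) : Ifun w (c • x) = c * Ifun w x := by
  simp only [Ifun, Pi.smul_apply, smul_eq_mul, ← mul_sub, abs_mul, abs_of_nonneg hc, mul_sum]
  exact sum_congr rfl fun i _ ↦ sum_congr rfl fun j _ ↦ by ring

theorem Ifun_le_mul_norm (hnn : ∀ i j, 0 ≤ w i j) (y : Fin n → ℝ) :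
    Ifun w y ≤ (∑ i, ∑ j, w i j) * ‖y‖ := by
  have hdiff : ∀ i j, |y i - y j| ≤ 2 * ‖y‖ := fun i j ↦
    calc |y i - y j| ≤ |y i| + |y j| := abs_sub _ _
      _ ≤ ‖y‖ + ‖y‖ := add_le_add (norm_le_pi_norm y i) (norm_le_pi_norm y j)
      _ = 2 * ‖y‖ := by ring
  calc Ifun w y ≤ (1 / 2) * ∑ i, ∑ j, w i j * (2 * ‖y‖) := by
        unfold Ifun
        gcongr with i _ j _
        exacts [hnn i j, hdiff i j]
    _ = (∑ i, ∑ j, w i j) * ‖y‖ := by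
        simp only [← sum_mul]
        ring

theorem bddAbove_Ifun_div_norm (hnn : ∀ i j, 0 ≤ w i j) :
    BddAbove {c : ℝ | ∃ y : Fin n → ℝ, y ≠ 0 ∧ c = Ifun w y / ‖y‖} := by
  refine ⟨∑ i, ∑ j, w i j, ?_⟩
  rintro c ⟨y, hy, rfl⟩
  exact (div_le_iff₀ (norm_pos_iff.mpr hy)).mpr (Ifun_le_mul_norm w hnn y)

end Ifun

theorem stmt4_general {n : ℕ} (w : Fin n → Fin n → ℝ)
    (hnn : ∀ i j, 0 ≤ w i j)
    (p : ℝ≥0∞) (hp : 1 ≤ p)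
    (x : ℕ → Fin n → ℝ) (r : ℕ → ℝ)
    (hx0 : x 0 ≠ 0)
    (hr : ∀ k, r k = Ifun w (x k) / ‖x k‖)
    (hmin : ∀ k, pnorm p (x (k + 1)) = 1 ∧
      ∀ y : Fin n → ℝ, pnorm p y = 1 →
        r k * ‖x (k + 1)‖ - Ifun w (x (k + 1)) ≤ r k * ‖y‖ - Ifun w y) :
    (∀ k, r k ≤ r (k + 1)) ∧
      ∀ k, r k ≤ sSup {c : ℝ | ∃ y : Fin n → ℝ, y ≠ 0 ∧ c = Ifun w y / ‖y‖} := by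
  have hx : ∀ k, x k ≠ 0
    | 0 => hx0
    | k + 1 => ne_zero_of_pnorm_eq_one hp (hmin k).1
  refine ⟨fun k ↦ ?_, fun k ↦ le_csSup (bddAbove_Ifun_div_norm w hnn) ⟨x k, hx k, hr k⟩⟩
  have hc : 0 ≤ (pnorm p (x k))⁻¹ := inv_nonneg.mpr (pnorm_nonneg p (x k))
  rw [hr, hr]
  refine div_le_div_of_isMinOn_sub (S := {y | pnorm p y = 1}) ?_
    (pnorm_inv_smul_self hp (hx k)) (Ifun_smul w hc _) (norm_smul_of_nonneg hc _)
    (norm_ne_zero_iff.mpr (hx k)) (norm_pos_iff.mpr (hx (k + 1)))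
  exact isMinOn_iff.mpr fun y hy ↦ hr k ▸ (hmin k).2 y hy

/-- Dinkelbach iteration: `(r^k)` is nondecreasing and bounded above by `max F`. -/
theorem stmt4 {n : ℕ} (w : Fin n → Fin n → ℝ)
    (hsym : ∀ i j, w i j = w j i) (hnn : ∀ i j, 0 ≤ w i j)
    (p : ℝ≥0∞) (hp : 1 ≤ p)
    (x : ℕ → Fin n → ℝ) (r : ℕ → ℝ)
    (hx0 : x 0 ≠ 0)
    (hr : ∀ k, r k = Ifun w (x k) / ‖x k‖)
    (hmin : ∀ k, pnorm p (x (k + 1)) = 1 ∧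
      ∀ y : Fin n → ℝ, pnorm p y = 1 →
        r k * ‖x (k + 1)‖ - Ifun w (x (k + 1)) ≤ r k * ‖y‖ - Ifun w y) :
    (∀ k, r k ≤ r (k + 1)) ∧
      ∀ k, r k ≤ sSup {c : ℝ | ∃ y : Fin n → ℝ, y ≠ 0 ∧ c = Ifun w y / ‖y‖} :=
  stmt4_general w hnn p hp x r hx0 hr hmin
end

section
/- Let r > 0, v ∈ ℝ^n with r = ‖v‖_1, and p ∈ [1,∞]. Then x* minimizes r‖x‖_∞ − ⟨x, v⟩ over {‖x‖_p = 1} if and only if ‖x*‖_p = 1 and x*_i/‖x*‖_∞ ∈ Sgn(v_i) for every i. -/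
/-!
By the `ℓ^∞`–`ℓ^1` Hölder inequality `⟨x, v⟩ ≤ ‖x‖_∞ ‖v‖_1`, the objective `r‖x‖_∞ − ⟨x, v⟩`
is nonnegative, and it vanishes exactly when every term satisfies `x_i v_i = ‖x‖_∞ |v_i|`,
i.e. when `x_i / ‖x‖_∞ ∈ Sgn(v_i)`. The value `0` is attained on the unit `p`-sphere by a
rescaled sign vector of `v`, so the minimizers are exactly the points where it vanishes.
-/

open Finset
open scoped ENNReal

noncomputable def SgnSet (t : ℝ) : Set ℝ :=
  if 0 < t then {1} else if t < 0 then {-1} else Set.Icc (-1) 1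

section Pnorm

variable {n : ℕ} {p : ℝ≥0∞}

-- `p ≠ 0` excludes the junk case `pnorm 0 = 1`, where the exponent `1 / p.toReal` is `0`.
lemma pnorm_smul_of_nonneg (hp : p ≠ 0) {c : ℝ} (hc : 0 ≤ c) (x : Fin n → ℝ) :
    pnorm p (c • x) = c * pnorm p x := by
  unfold pnorm
  split_ifs with hT
  · rw [norm_smul, Real.norm_eq_abs, abs_of_nonneg hc]
  · have ht : 0 < p.toReal := ENNReal.toReal_pos hp hT
    have hterm : ∀ i, |(c • x) i| ^ p.toReal = c ^ p.toReal * |x i| ^ p.toReal := fun i => by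
      rw [Pi.smul_apply, smul_eq_mul, abs_mul, Real.mul_rpow (abs_nonneg _) (abs_nonneg _),
        abs_of_nonneg hc]
    rw [sum_congr rfl fun i _ => hterm i, ← mul_sum,
      Real.mul_rpow (by positivity) (by positivity), ← Real.rpow_mul hc,
      mul_one_div_cancel ht.ne', Real.rpow_one]

lemma pnorm_zero (hp : p ≠ 0) : pnorm p (0 : Fin n → ℝ) = 0 := by
  simpa using pnorm_smul_of_nonneg hp le_rfl (0 : Fin n → ℝ)

lemma pnorm_pos {x : Fin n → ℝ} (hx : x ≠ 0) : 0 < pnorm p x := by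
  unfold pnorm
  split_ifs with hT
  · exact norm_pos_iff.mpr hx
  · obtain ⟨i, hi⟩ := Function.ne_iff.mp hx
    have hsum : 0 < ∑ j, |x j| ^ p.toReal :=
      sum_pos' (fun j _ => by positivity) ⟨i, mem_univ i, Real.rpow_pos_of_pos (abs_pos.mpr hi) _⟩
    positivity

end Pnorm

lemma mul_eq_mul_abs_iff_div_mem_SgnSet {a m t : ℝ} (hm : 0 < m) (ha : |a| ≤ m) :
    a * t = m * |t| ↔ a / m ∈ SgnSet t := by
  unfold SgnSet
  split_ifs with hpos hneg
  · rw [abs_of_pos hpos, Set.mem_singleton_iff, div_eq_one_iff_eq hm.ne', mul_left_inj' hpos.ne']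
  · rw [abs_of_neg hneg, Set.mem_singleton_iff, div_eq_iff hm.ne', neg_one_mul, mul_neg,
      ← neg_mul, mul_left_inj' hneg.ne]
  · obtain rfl : t = 0 := le_antisymm (not_lt.mp hpos) (not_lt.mp hneg)
    simpa [Set.mem_Icc, le_div_iff₀ hm, div_le_one hm, neg_le] using abs_le.mp ha

section Objective

variable {ι : Type*} [Fintype ι]

lemma mul_le_norm_mul_abs (x v : ι → ℝ) (i : ι) : x i * v i ≤ ‖x‖ * |v i| :=
  calc x i * v i ≤ |x i| * |v i| := by rw [← abs_mul]; exact le_abs_self _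
    _ ≤ ‖x‖ * |v i| := mul_le_mul_of_nonneg_right (norm_le_pi_norm x i) (abs_nonneg _)

noncomputable def objective (v x : ι → ℝ) : ℝ :=
  (∑ i, |v i|) * ‖x‖ - ∑ i, x i * v i

lemma objective_eq_sum (v x : ι → ℝ) :
    objective v x = ∑ i, (‖x‖ * |v i| - x i * v i) := by
  rw [objective, sum_sub_distrib, ← mul_sum, mul_comm]

lemma objective_nonneg (v x : ι → ℝ) : 0 ≤ objective v x := by
  rw [objective_eq_sum]
  exact sum_nonneg fun i _ => sub_nonneg.mpr (mul_le_norm_mul_abs x v i)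

lemma objective_smul_of_nonneg {c : ℝ} (hc : 0 ≤ c) (v x : ι → ℝ) :
    objective v (c • x) = c * objective v x := by
  simp only [objective, norm_smul, Real.norm_eq_abs, abs_of_nonneg hc, Pi.smul_apply,
    smul_eq_mul, mul_assoc, ← mul_sum]
  ring

lemma objective_eq_zero_iff {v x : ι → ℝ} (hx : x ≠ 0) :
    objective v x = 0 ↔ ∀ i, x i / ‖x‖ ∈ SgnSet (v i) := by
  have hterm : ∀ i ∈ univ, 0 ≤ ‖x‖ * |v i| - x i * v i :=
    fun i _ => sub_nonneg.mpr (mul_le_norm_mul_abs x v i)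
  rw [objective_eq_sum, sum_eq_zero_iff_of_nonneg hterm]
  refine forall_congr' fun i => ?_
  rw [← mul_eq_mul_abs_iff_div_mem_SgnSet (norm_pos_iff.mpr hx) (norm_le_pi_norm x i)]
  simp only [mem_univ, true_implies, sub_eq_zero]
  exact eq_comm

lemma objective_sign_eq_zero (v : ι → ℝ) :
    objective v (fun i => if 0 ≤ v i then 1 else -1) = 0 := by
  set z : ι → ℝ := fun i => if 0 ≤ v i then 1 else -1
  have hpair : ∀ i, z i * v i = |v i| := fun i => by
    simp only [z]
    split_ifs with h
    · rw [one_mul, abs_of_nonneg h]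
    · rw [neg_one_mul, abs_of_neg (not_le.mp h)]
  have hnorm : ‖z‖ ≤ 1 := (pi_norm_le_iff_of_nonneg zero_le_one).mpr fun i => by
    simp only [z]
    split_ifs <;> norm_num
  refine le_antisymm ?_ (objective_nonneg v z)
  calc objective v z = (∑ i, |v i|) * (‖z‖ - 1) := by
        rw [objective, sum_congr rfl fun i _ => hpair i]
        ring
    _ ≤ 0 := mul_nonpos_of_nonneg_of_nonpos (sum_nonneg fun i _ => abs_nonneg _) (by linarith)

end Objective

lemma exists_pnorm_eq_one_objective_eq_zero {n : ℕ} {p : ℝ≥0∞} (hp : p ≠ 0) [Nonempty (Fin n)]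
    (v : Fin n → ℝ) : ∃ y, pnorm p y = 1 ∧ objective v y = 0 := by
  set z : Fin n → ℝ := fun i => if 0 ≤ v i then 1 else -1
  have hz : z ≠ 0 := fun h => by
    obtain ⟨i⟩ := ‹Nonempty (Fin n)›
    have hi := congr_fun h i
    simp only [z, Pi.zero_apply] at hi
    split_ifs at hi <;> norm_num at hi
  have hc : 0 < pnorm p z := pnorm_pos hz
  refine ⟨(pnorm p z)⁻¹ • z, ?_, ?_⟩
  · rw [pnorm_smul_of_nonneg hp (inv_nonneg.mpr hc.le), inv_mul_cancel₀ hc.ne']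
  · rw [objective_smul_of_nonneg (inv_nonneg.mpr hc.le), objective_sign_eq_zero, mul_zero]

theorem stmt10_general {n : ℕ} (p : ℝ≥0∞) (hp : 1 ≤ p)
    (r : ℝ) (v : Fin n → ℝ) (hrv : r = ∑ i, |v i|)
    (xs : Fin n → ℝ) :
    (pnorm p xs = 1 ∧ ∀ y : Fin n → ℝ, pnorm p y = 1 →
        r * ‖xs‖ - ∑ i, xs i * v i ≤ r * ‖y‖ - ∑ i, y i * v i)
      ↔ (pnorm p xs = 1 ∧ ∀ i, xs i / ‖xs‖ ∈ SgnSet (v i)) := by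
  subst hrv
  simp only [← objective.eq_1]
  have hp0 : p ≠ 0 := (one_pos.trans_le hp).ne'
  refine and_congr_right fun hxs => ?_
  have hx0 : xs ≠ 0 := by
    rintro rfl
    rw [pnorm_zero hp0] at hxs
    exact zero_ne_one hxs
  have : Nonempty (Fin n) := ⟨(Function.ne_iff.mp hx0).choose⟩
  obtain ⟨y₀, hy₀, hobj₀⟩ := exists_pnorm_eq_one_objective_eq_zero hp0 v
  rw [← objective_eq_zero_iff hx0]
  exact ⟨fun hmin => le_antisymm (hobj₀ ▸ hmin y₀ hy₀) (objective_nonneg v xs),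
    fun h y _ => h ▸ objective_nonneg v y⟩

/-- If `r = ‖v‖₁ > 0`, then `x*` minimizes `r‖x‖_∞ − ⟨x,v⟩` over the unit `p`-sphere
iff `‖x*‖_p = 1` and `x*_i/‖x*‖_∞ ∈ Sgn(v_i)` for every `i`. -/
theorem stmt10 {n : ℕ} (p : ℝ≥0∞) (hp : 1 ≤ p)
    (r : ℝ) (hr : 0 < r) (v : Fin n → ℝ) (hrv : r = ∑ i, |v i|)
    (xs : Fin n → ℝ) :
    (pnorm p xs = 1 ∧ ∀ y : Fin n → ℝ, pnorm p y = 1 →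
        r * ‖xs‖ - ∑ i, xs i * v i ≤ r * ‖y‖ - ∑ i, y i * v i)
      ↔ (pnorm p xs = 1 ∧ ∀ i, xs i / ‖xs‖ ∈ SgnSet (v i)) :=
  stmt10_general p hp r v hrv xs
end
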